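/- Let (𝒞, 𝒞^⊥¹) be a cotorsion pair on 𝓑. Then every object X admits a commutative diagram of short exact sequences: 0→X→T₀→C₀→0 with T₀ ∈ 𝒞^⊥¹ and C₀ ∈ 𝒞; 0→U₀→u₀→P₀→C₀→0 with P₀ projective (so U₀ ∈ Ω𝒞); an epimorphism f₀ : U₀ → X with kernel Y₀, fitting into short exact sequences 0→Y₀→g₀→U₀→f₀→X→0 and 0→Y₀→P₀→T₀→0 compatible with the above rows; and moreover f₀ is a right Ω𝒞-approximation of X, i.e. every morphism U→X with U ∈ Ω𝒞 factors through f₀. -/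

import Mathlib

open CategoryTheory Category Limits ZeroObject

universe v u

namespace CotorsionPaper

variable {B : Type u} [Category.{v} B] [Abelian B]

/-- `f, g` form a short exact sequence `0 → X → Y → Z → 0`. -/
def IsSES {X Y Z : B} (f : X ⟶ Y) (g : Y ⟶ Z) : Prop :=
  ∃ w : f ≫ g = 0, (ShortComplex.mk f g w).ShortExact

/-- `Ext¹(X, Y) = 0`: every short exact sequence `0 → Y → E → X → 0` splits. -/
def Ext1Zero (X Y : B) : Prop :=
  ∀ ⦃E : B⦄ (i : Y ⟶ E) (p : E ⟶ X), IsSES i p → ∃ s : X ⟶ E, s ≫ p = 𝟙 X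

/-- `Ext²(X, Y) = 0`, via dimension shifting: `Ext¹(K, Y) = 0` for any syzygy `K` of `X`. -/
def Ext2Zero (X Y : B) : Prop :=
  ∀ ⦃K P : B⦄ (i : K ⟶ P) (p : P ⟶ X), Projective P → IsSES i p → Ext1Zero K Y

/-- A (strictly) full additive subcategory: closed under isomorphisms,
contains a zero object and is closed under finite direct sums. -/
structure AddSubcat (S : Set B) : Prop where
  zero_mem : (0 : B) ∈ S
  iso_closed : ∀ ⦃X Y : B⦄, (X ≅ Y) → X ∈ S → Y ∈ S
  sum_closed : ∀ ⦃X Y : B⦄, X ∈ S → Y ∈ S → (X ⊞ Y) ∈ S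

/-- `S` is closed under direct summands (retracts). -/
def ClosedUnderSummands (S : Set B) : Prop :=
  ∀ ⦃X Y : B⦄ (r : X ⟶ Y) (s : Y ⟶ X), s ≫ r = 𝟙 Y → X ∈ S → Y ∈ S

/-- `S` is rigid: `Ext¹(X, Y) = 0` for all `X, Y ∈ S`. -/
def Rigid (S : Set B) : Prop :=
  ∀ ⦃X⦄, X ∈ S → ∀ ⦃Y⦄, Y ∈ S → Ext1Zero X Y

/-- `S^⊥¹`. -/
def rightPerp (S : Set B) : Set B := {Y | ∀ ⦃X⦄, X ∈ S → Ext1Zero X Y}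

/-- `^⊥¹S`. -/
def leftPerp (S : Set B) : Set B := {X | ∀ ⦃Y⦄, Y ∈ S → Ext1Zero X Y}

/-- `f : X ⟶ A` is a right `S`-approximation of `A`. -/
def IsRightApprox (S : Set B) {X A : B} (f : X ⟶ A) : Prop :=
  X ∈ S ∧ ∀ ⦃X' : B⦄, X' ∈ S → ∀ g : X' ⟶ A, ∃ h : X' ⟶ X, h ≫ f = g

def ContravariantlyFinite (S : Set B) : Prop :=
  ∀ A : B, ∃ (X : B) (f : X ⟶ A), IsRightApprox S f

/-- `f : A ⟶ X` is a left `S`-approximation of `A`. -/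
def IsLeftApprox (S : Set B) {A X : B} (f : A ⟶ X) : Prop :=
  X ∈ S ∧ ∀ ⦃X' : B⦄, X' ∈ S → ∀ g : A ⟶ X', ∃ h : X ⟶ X', f ≫ h = g

def CovariantlyFinite (S : Set B) : Prop :=
  ∀ A : B, ∃ (X : B) (f : A ⟶ X), IsLeftApprox S f

/-- `(U, V)` is a cotorsion pair. -/
structure CotorsionPair (U V : Set B) : Prop where
  summands_left : ClosedUnderSummands U
  summands_right : ClosedUnderSummands V
  ext : ∀ ⦃X⦄, X ∈ U → ∀ ⦃Y⦄, Y ∈ V → Ext1Zero X Y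
  resol : ∀ X : B, ∃ (VX UX : B) (i : VX ⟶ UX) (p : UX ⟶ X),
    VX ∈ V ∧ UX ∈ U ∧ IsSES i p
  coresol : ∀ X : B, ∃ (VX UX : B) (i : X ⟶ VX) (p : VX ⟶ UX),
    VX ∈ V ∧ UX ∈ U ∧ IsSES i p

/-- `CoCone(S, T)`. -/
def CoCone (S T : Set B) : Set B :=
  {X | ∃ (B' B'' : B) (i : X ⟶ B') (p : B' ⟶ B''), B' ∈ S ∧ B'' ∈ T ∧ IsSES i p}

/-- `Cone(S, T)`. -/
def Cone (S T : Set B) : Set B :=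
  {X | ∃ (B' B'' : B) (i : B' ⟶ B'') (p : B'' ⟶ X), B' ∈ S ∧ B'' ∈ T ∧ IsSES i p}

/-- The subcategory `𝒫` of projective objects. -/
def projSet : Set B := {P | Projective P}

/-- The subcategory `ℐ` of injective objects. -/
def injSet : Set B := {I | Injective I}

/-- `Ω𝒞`, the (first) syzygy of `𝒞`. -/
def Syz (C : Set B) : Set B := CoCone projSet C

/-- Condition (RCP): `𝒫 ⊆ 𝒞`, `𝒞` rigid, contravariantly finite,
closed under direct summands (and a full additive subcategory). -/
structure RCP (C : Set B) : Prop where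
  add : AddSubcat C
  proj_mem : ∀ ⦃P : B⦄, Projective P → P ∈ C
  rigid : Rigid C
  contra : ContravariantlyFinite C
  summands : ClosedUnderSummands C

/-- `f` factors through an object of `S`. -/
def FactorsThru (S : Set B) {X Y : B} (f : X ⟶ Y) : Prop :=
  ∃ (Z : B) (g : X ⟶ Z) (h : Z ⟶ Y), Z ∈ S ∧ g ≫ h = f

/-- The ideal of morphisms of the full subcategory on `H` factoring through an object of `S`. -/
def idealRel (H S : Set B) : HomRel (ObjectProperty.FullSubcategory (show ObjectProperty B from H)) :=
  fun X Y f g => FactorsThru S (show X.obj ⟶ Y.obj from (f - g).hom)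

/-- The ideal quotient `H/S`. -/
abbrev HeartCat (H S : Set B) := CategoryTheory.Quotient (idealRel H S)

/-- The quotient functor `H → H/S`. -/
abbrev heartQ (H S : Set B) : ObjectProperty.FullSubcategory (show ObjectProperty B from H) ⥤ HeartCat H S :=
  CategoryTheory.Quotient.functor _

/-- The zero morphism in the ideal quotient `H/S`. -/
def heartZero (H S : Set B) (X Y : HeartCat H S) : X ⟶ Y :=
  (heartQ H S).map (0 : X.as ⟶ Y.as)

/-- `κ` is a kernel of `φ` in the ideal quotient `H/S`. -/
structure IsKernelArrow {H S : Set B} {K X Y : HeartCat H S}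
    (κ : K ⟶ X) (φ : X ⟶ Y) : Prop where
  w : κ ≫ φ = heartZero H S K Y
  lift : ∀ ⦃T : HeartCat H S⦄ (t : T ⟶ X), t ≫ φ = heartZero H S T Y →
    ∃! u : T ⟶ K, u ≫ κ = t

/-- `π` is a cokernel of `φ` in the ideal quotient `H/S`. -/
structure IsCokernelArrow {H S : Set B} {X Y Q : HeartCat H S}
    (φ : X ⟶ Y) (π : Y ⟶ Q) : Prop where
  w : φ ≫ π = heartZero H S X Q
  desc : ∀ ⦃T : HeartCat H S⦄ (t : Y ⟶ T), φ ≫ t = heartZero H S X T →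
    ∃! u : Q ⟶ T, π ≫ u = t

/-- The class of epimorphisms in `H/S` whose kernel object lies in `A`. -/
def epiClassWithKernelIn (H S A : Set B) : MorphismProperty (HeartCat H S) :=
  fun X Y φ => Epi φ ∧ ∃ (K : HeartCat H S) (κ : K ⟶ X),
    K.as.obj ∈ A ∧ IsKernelArrow κ φ

/-- The class of monomorphisms in `H/S` whose cokernel object lies in `A`. -/
def monoClassWithCokernelIn (H S A : Set B) : MorphismProperty (HeartCat H S) :=
  fun X Y φ => Mono φ ∧ ∃ (Q : HeartCat H S) (π : Y ⟶ Q),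
    Q.as.obj ∈ A ∧ IsCokernelArrow φ π

/-- The diagram `(⋄)` associated with a morphism `f : Y ⟶ X`. -/
structure DiamondDiagram {Y X : B} (f : Y ⟶ X) {OmX PX Z₁ IY SgY Z₂ : B}
    (q : OmX ⟶ PX) (p : PX ⟶ X) (j : OmX ⟶ Z₁) (g : Z₁ ⟶ Y)
    (i : Y ⟶ IY) (c : IY ⟶ SgY) (h : X ⟶ Z₂) (e : Z₂ ⟶ SgY)
    (u : Z₁ ⟶ PX) (v : IY ⟶ Z₂) : Prop where
  projPX : Projective PX
  injIY : Injective IY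
  ses_proj : IsSES q p
  ses_pullback : IsSES j g
  ses_inj : IsSES i c
  ses_pushout : IsSES h e
  comm₁ : j ≫ u = q
  comm₂ : u ≫ p = g ≫ f
  comm₃ : f ≫ h = i ≫ v
  comm₄ : v ≫ e = c

/-- The class of morphisms `f : Y ⟶ X` admitting a diagram `(⋄)` with
`Z₁ ∈ ZCond` and `h` factoring through an object of `HCond`. -/
def Rclass (ZCond HCond : Set B) : MorphismProperty B :=
  fun Y X f => ∃ (OmX PX Z₁ IY SgY Z₂ : B) (q : OmX ⟶ PX) (p : PX ⟶ X)
    (j : OmX ⟶ Z₁) (g : Z₁ ⟶ Y) (i : Y ⟶ IY) (c : IY ⟶ SgY)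
    (h : X ⟶ Z₂) (e : Z₂ ⟶ SgY) (u : Z₁ ⟶ PX) (v : IY ⟶ Z₂),
    DiamondDiagram f q p j g i c h e u v ∧ Z₁ ∈ ZCond ∧ FactorsThru HCond h

/-- The class of morphisms `f : Y ⟶ X` admitting a diagram `(⋄)` with
`g` factoring through an object of `GCond` and `h` through an object of `HCond`. -/
def RtildeClass (GCond HCond : Set B) : MorphismProperty B :=
  fun Y X f => ∃ (OmX PX Z₁ IY SgY Z₂ : B) (q : OmX ⟶ PX) (p : PX ⟶ X)
    (j : OmX ⟶ Z₁) (g : Z₁ ⟶ Y) (i : Y ⟶ IY) (c : IY ⟶ SgY)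
    (h : X ⟶ Z₂) (e : Z₂ ⟶ SgY) (u : Z₁ ⟶ PX) (v : IY ⟶ Z₂),
    DiamondDiagram f q p j g i c h e u v ∧ FactorsThru GCond g ∧ FactorsThru HCond h

/-- The objects of the heart `ℋ` of a cotorsion pair `(U, V)`. -/
def HeartObjects (U V : Set B) : Set B :=
  {X | (∃ (VX UX : B) (i : VX ⟶ UX) (p : UX ⟶ X),
          IsSES i p ∧ VX ∈ V ∧ UX ∈ U ∩ V) ∧
       (∃ (VX UX : B) (i : X ⟶ VX) (p : VX ⟶ UX),
          IsSES i p ∧ VX ∈ U ∩ V ∧ UX ∈ U)}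

/-!
Pull back a projective cover `m : P₀ ⟶ T₀` along the `𝒞^⊥¹`-envelope `x : X ⟶ T₀` of
`0 → X → T₀ → C₀ → 0`. The pullback `U₀` is the kernel of `P₀ ⟶ T₀ ⟶ C₀`, so it lies in `Ω𝒞`,
and `U₀ ⟶ X` is an epimorphism with the same kernel as `m`. It is a right `Ω𝒞`-approximation:
given `0 → U → Q → D → 0` with `Q` projective and `D ∈ 𝒞`, a map `U ⟶ X ⟶ T₀` extends to `Q`
because `Ext¹(D, T₀) = 0`, lifts along `m` because `Q` is projective, and then factors through
the pullback.
-/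

lemma IsSES.exists_retraction {Y E X : B} {i : Y ⟶ E} {p : E ⟶ X} (h : IsSES i p)
    {s : X ⟶ E} (hs : s ≫ p = 𝟙 X) : ∃ r : E ⟶ Y, i ≫ r = 𝟙 Y := by
  obtain ⟨_, hses⟩ := h
  exact ⟨_, (ShortComplex.Splitting.ofExactOfSection _ hses.exact s hs hses.mono_f).f_r⟩

lemma IsSES.exists_pushout {U Q D : B} {ι : U ⟶ Q} {π : Q ⟶ D} (h : IsSES ι π)
    {T : B} (f : U ⟶ T) :
    ∃ (E : B) (inl : T ⟶ E) (inr : Q ⟶ E) (d : E ⟶ D), f ≫ inl = ι ≫ inr ∧ IsSES inl d := by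
  obtain ⟨w, hses⟩ := h
  have : Mono ι := hses.mono_f
  have : Epi π := hses.epi_g
  have sq := IsPushout.of_hasPushout f ι
  let d := sq.desc 0 π (by simp [w])
  have hinl : pushout.inl f ι ≫ d = 0 := sq.inl_desc ..
  have hinr : pushout.inr f ι ≫ d = π := sq.inr_desc ..
  have : Epi d := epi_of_epi_fac hinr
  refine ⟨_, _, _, d, sq.w, hinl, .mk' ?_ inferInstance inferInstance⟩
  refine ShortComplex.exact_of_g_is_cokernel _ <|
    CokernelCofork.IsColimit.ofπ' _ _ fun t ht => ?_
  obtain ⟨s, hs : π ≫ s = _⟩ :=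
    CokernelCofork.IsColimit.desc' hses.gIsCokernel (pushout.inr f ι ≫ t)
    (by rw [← reassoc_of% sq.w, ht, comp_zero])
  exact ⟨s, sq.hom_ext (by simp [reassoc_of% hinl, ht]) (by simp [reassoc_of% hinr, hs])⟩

lemma Ext1Zero.exists_extension {U Q D T : B} {ι : U ⟶ Q} {π : Q ⟶ D} (hext : Ext1Zero D T)
    (h : IsSES ι π) (f : U ⟶ T) : ∃ g : Q ⟶ T, ι ≫ g = f := by
  obtain ⟨E, inl, inr, d, hsq, hE⟩ := h.exists_pushout f
  obtain ⟨s, hs⟩ := hext inl d hE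
  obtain ⟨r, hr⟩ := hE.exists_retraction hs
  exact ⟨inr ≫ r, by rw [← reassoc_of% hsq, hr, comp_id]⟩

lemma isSES_kernel_ι {Y Z : B} (f : Y ⟶ Z) [Epi f] : IsSES (kernel.ι f) f :=
  ⟨kernel.condition f, { exact := ShortComplex.exact_of_f_is_kernel _ (kernelIsKernel f) }⟩

section Pullback

variable {U₀ X P T : B} {f₀ : U₀ ⟶ X} {u₀ : U₀ ⟶ P} {x : X ⟶ T} {m : P ⟶ T}

lemma isSES_snd_comp_of_isPullback (sq : IsPullback f₀ u₀ x m) [Epi m] {C₀ : B} {tc : T ⟶ C₀}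
    (hx : IsSES x tc) : IsSES u₀ (m ≫ tc) := by
  obtain ⟨w, hses⟩ := hx
  have : Mono x := hses.mono_f
  have : Epi tc := hses.epi_g
  have : Mono u₀ := sq.mono_snd_of_mono
  refine ⟨by rw [← reassoc_of% sq.w, w, comp_zero], .mk' ?_ inferInstance (epi_comp _ _)⟩
  refine ShortComplex.exact_of_f_is_kernel _ <| KernelFork.IsLimit.ofι' _ _ fun t ht => ?_
  obtain ⟨a, ha⟩ := KernelFork.IsLimit.lift' hses.fIsKernel (t ≫ m) (by simpa using ht)
  exact ⟨sq.lift a t ha, sq.lift_snd ..⟩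

lemma exists_isSES_fst_of_isPullback (sq : IsPullback f₀ u₀ x m) {Y₀ : B} {y₀ : Y₀ ⟶ P}
    (hy : IsSES y₀ m) : ∃ g₀ : Y₀ ⟶ U₀, g₀ ≫ u₀ = y₀ ∧ IsSES g₀ f₀ := by
  obtain ⟨w, hses⟩ := hy
  have : Mono y₀ := hses.mono_f
  have : Epi m := hses.epi_g
  let g₀ := sq.lift 0 y₀ (by simp [w])
  have hg₀f₀ : g₀ ≫ f₀ = 0 := sq.lift_fst ..
  have hg₀u₀ : g₀ ≫ u₀ = y₀ := sq.lift_snd ..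
  have : Mono g₀ := mono_of_mono_fac hg₀u₀
  refine ⟨g₀, hg₀u₀, hg₀f₀, .mk' ?_ inferInstance (Abelian.epi_fst_of_isLimit _ _ sq.isLimit)⟩
  refine ShortComplex.exact_of_f_is_kernel _ <| KernelFork.IsLimit.ofι' _ _ fun t ht => ?_
  obtain ⟨s, hs : s ≫ y₀ = _⟩ := KernelFork.IsLimit.lift' hses.fIsKernel (t ≫ u₀)
    (by rw [assoc, ← sq.w, reassoc_of% ht, zero_comp])
  exact ⟨s, sq.hom_ext (by simp [g₀, ht]) (by simp [g₀, hs])⟩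

lemma isRightApprox_syz_of_isPullback (sq : IsPullback f₀ u₀ x m) [Epi m] {C : Set B}
    (hU₀ : U₀ ∈ Syz C) (hT : T ∈ rightPerp C) : IsRightApprox (Syz C) f₀ := by
  refine ⟨hU₀, fun U ⟨Q, D, ι, π, hQ, hD, hι⟩ g => ?_⟩
  obtain ⟨e, he⟩ := (hT hD).exists_extension hι (g ≫ x)
  have : Projective Q := hQ
  refine ⟨sq.lift g (ι ≫ Projective.factorThru e m) ?_, sq.lift_fst ..⟩
  rw [assoc, Projective.factorThru_comp, he]

end Pullback

theorem statement_2_general {B : Type u} [Category.{v} B] [Abelian B]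
    [EnoughProjectives B]
    (C : Set B) (hcp : CotorsionPair C (rightPerp C)) :
    ∀ X : B, ∃ (Y₀ U₀ P₀ T₀ C₀ : B)
      (g₀ : Y₀ ⟶ U₀) (f₀ : U₀ ⟶ X) (y₀ : Y₀ ⟶ P₀) (m : P₀ ⟶ T₀)
      (u₀ : U₀ ⟶ P₀) (pc : P₀ ⟶ C₀) (x : X ⟶ T₀) (tc : T₀ ⟶ C₀),
      T₀ ∈ rightPerp C ∧ C₀ ∈ C ∧ Projective P₀ ∧
      IsSES g₀ f₀ ∧ IsSES y₀ m ∧ IsSES u₀ pc ∧ IsSES x tc ∧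
      g₀ ≫ u₀ = y₀ ∧ f₀ ≫ x = u₀ ≫ m ∧ m ≫ tc = pc ∧
      IsRightApprox (Syz C) f₀ := by
  intro X
  obtain ⟨T₀, C₀, x, tc, hT₀, hC₀, hx⟩ := hcp.coresol X
  let m := Projective.π T₀
  have sq := IsPullback.of_hasPullback x m
  have hu₀ := isSES_snd_comp_of_isPullback sq hx
  have hU₀ : pullback x m ∈ Syz C := ⟨_, _, _, _, Projective.projective_over T₀, hC₀, hu₀⟩
  obtain ⟨g₀, hg₀u₀, hg₀⟩ := exists_isSES_fst_of_isPullback sq (isSES_kernel_ι m)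
  exact ⟨_, _, _, _, _, g₀, _, _, m, _, _, x, tc, hT₀, hC₀, inferInstance, hg₀,
    isSES_kernel_ι m, hu₀, hx, hg₀u₀, sq.w, rfl, isRightApprox_syz_of_isPullback sq hU₀ hT₀⟩

/-- the syzygy-approximation diagram for a cotorsion pair `(𝒞, 𝒞^⊥¹)`. -/
theorem statement_2 {B : Type u} [Category.{v} B] [Abelian B]
    [EnoughProjectives B] [EnoughInjectives B]
    (C : Set B) (hcp : CotorsionPair C (rightPerp C)) :
    ∀ X : B, ∃ (Y₀ U₀ P₀ T₀ C₀ : B)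
      (g₀ : Y₀ ⟶ U₀) (f₀ : U₀ ⟶ X) (y₀ : Y₀ ⟶ P₀) (m : P₀ ⟶ T₀)
      (u₀ : U₀ ⟶ P₀) (pc : P₀ ⟶ C₀) (x : X ⟶ T₀) (tc : T₀ ⟶ C₀),
      T₀ ∈ rightPerp C ∧ C₀ ∈ C ∧ Projective P₀ ∧
      IsSES g₀ f₀ ∧ IsSES y₀ m ∧ IsSES u₀ pc ∧ IsSES x tc ∧
      g₀ ≫ u₀ = y₀ ∧ f₀ ≫ x = u₀ ≫ m ∧ m ≫ tc = pc ∧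
      IsRightApprox (Syz C) f₀ :=
  statement_2_general C hcp

end CotorsionPaper
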